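/- For any graphs G and H, the twins-free clique number satisfies ϖ(G ⊕ H) ≥ ϖ(G) · ϖ(H). -/

import Mathlib

open SimpleGraph

/-- The Cartesian sum (disjunctive product) of two simple graphs. -/
def cartSum {α β : Type*} (G : SimpleGraph α) (H : SimpleGraph β) :
    SimpleGraph (α × β) where
  Adj x y := G.Adj x.1 y.1 ∨ H.Adj x.2 y.2
  symm := by
    constructor
    intro x y h
    exact h.imp (fun h' => h'.symm) (fun h' => h'.symm)
  loopless := by
    constructor
    intro x h
    exact h.elim (fun h' => h'.ne rfl) (fun h' => h'.ne rfl)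

/-- Two vertices are true twins if they are distinct and have equal closed
neighborhoods. -/
def TrueTwins {α : Type*} (G : SimpleGraph α) (u v : α) : Prop :=
  u ≠ v ∧ ∀ w, (G.Adj u w ∨ u = w) ↔ (G.Adj v w ∨ v = w)

/-- A twins-free clique: a clique containing no pair of true twins. -/
def IsTFClique {α : Type*} (G : SimpleGraph α) (s : Finset α) : Prop :=
  G.IsClique ↑s ∧ ∀ u ∈ s, ∀ v ∈ s, ¬ TrueTwins G u v

/-- The twins-free clique number. -/
noncomputable def tfCliqueNum {α : Type*} (G : SimpleGraph α) [Fintype α] : ℕ :=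
  sSup {n | ∃ s : Finset α, IsTFClique G s ∧ s.card = n}

/-- A strong resolving set: every pair of distinct vertices is strongly
resolved by some vertex of `S`. -/
def IsStrongResolvingSet {α : Type*} (G : SimpleGraph α) (S : Set α) : Prop :=
  ∀ u v : α, u ≠ v → ∃ w ∈ S,
    G.dist w u = G.dist w v + G.dist v u ∨ G.dist w v = G.dist w u + G.dist u v

/-- The strong metric dimension of a graph. -/
noncomputable def sdim {α : Type*} (G : SimpleGraph α) [Fintype α] : ℕ :=
  sInf {n | ∃ S : Finset α, IsStrongResolvingSet G ↑S ∧ S.card = n}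

/-- A vertex is isolated if it has no neighbors. -/
def IsIsolated {α : Type*} (G : SimpleGraph α) (u : α) : Prop :=
  ∀ w, ¬ G.Adj u w

/-!
The product of twins-free cliques `s ⊆ G` and `t ⊆ H` is a twins-free clique of `G ⊕ H`. Let
`(a, b)`, `(c, d)` be twins in it. If `a = c` then `b`, `d` are twins in `H`; if `b = d` then `a`,
`c` are twins in `G`. Otherwise `a ~ c`, so `(a, b)` is adjacent to every `(c, w)` and then so is
its twin `(c, d)`: `d`, and symmetrically `b`, is adjacent to every other vertex of `H`, so `b`
and `d` are twins.
-/

section CartSum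

variable {α β : Type*} {G : SimpleGraph α} {H : SimpleGraph β}

@[simp]
lemma cartSum_adj {x y : α × β} :
    (cartSum G H).Adj x y ↔ G.Adj x.1 y.1 ∨ H.Adj x.2 y.2 :=
  Iff.rfl

lemma isClique_cartSum_prod {s : Set α} {t : Set β} (hs : G.IsClique s) (ht : H.IsClique t) :
    (cartSum G H).IsClique (s ×ˢ t) := by
  rintro ⟨a, b⟩ ⟨ha, hb⟩ ⟨c, d⟩ ⟨hc, hd⟩ hne
  by_cases hac : a = c
  · subst hac
    exact Or.inr (ht hb hd fun hbd => hne (Prod.ext rfl hbd))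
  · exact Or.inl (hs ha hc hac)

lemma TrueTwins.symm {u v : α} (h : TrueTwins G u v) : TrueTwins G v u :=
  ⟨h.1.symm, fun w => (h.2 w).symm⟩

lemma trueTwins_of_forall_adj_or_eq {u v : α} (hne : u ≠ v)
    (hu : ∀ w, G.Adj u w ∨ u = w) (hv : ∀ w, G.Adj v w ∨ v = w) : TrueTwins G u v :=
  ⟨hne, fun w => iff_of_true (hu w) (hv w)⟩

lemma TrueTwins.snd_of_cartSum_of_fst_eq {a : α} {b d : β}
    (h : TrueTwins (cartSum G H) (a, b) (a, d)) : TrueTwins H b d :=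
  ⟨fun hbd => h.1 (by rw [hbd]), fun w => by simpa using h.2 (a, w)⟩

lemma TrueTwins.fst_of_cartSum_of_snd_eq {a c : α} {b : β}
    (h : TrueTwins (cartSum G H) (a, b) (c, b)) : TrueTwins G a c :=
  ⟨fun hac => h.1 (by rw [hac]), fun w => by simpa using h.2 (w, b)⟩

lemma TrueTwins.adj_or_eq_snd_of_cartSum_of_adj_fst {a c : α} {b d : β}
    (h : TrueTwins (cartSum G H) (a, b) (c, d)) (hac : G.Adj a c) (w : β) :
    H.Adj d w ∨ d = w := by
  simpa using (h.2 (c, w)).1 (Or.inl (Or.inl hac))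

lemma IsTFClique.cartSum {s : Finset α} {t : Finset β} (hs : IsTFClique G s)
    (ht : IsTFClique H t) : IsTFClique (cartSum G H) (s ×ˢ t) := by
  refine ⟨by simpa using isClique_cartSum_prod hs.1 ht.1, ?_⟩
  rintro ⟨a, b⟩ hab ⟨c, d⟩ hcd htw
  simp only [Finset.mem_product] at hab hcd
  by_cases hac : a = c
  · subst hac
    exact ht.2 b hab.2 d hcd.2 htw.snd_of_cartSum_of_fst_eq
  by_cases hbd : b = d
  · subst hbd
    exact hs.2 a hab.1 c hcd.1 htw.fst_of_cartSum_of_snd_eq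
  have hG : G.Adj a c := hs.1 hab.1 hcd.1 hac
  exact ht.2 b hab.2 d hcd.2 <| trueTwins_of_forall_adj_or_eq hbd
    (htw.symm.adj_or_eq_snd_of_cartSum_of_adj_fst hG.symm)
    (htw.adj_or_eq_snd_of_cartSum_of_adj_fst hG)

lemma bddAbove_card_isTFClique [Fintype α] (G : SimpleGraph α) :
    BddAbove {n | ∃ s : Finset α, IsTFClique G s ∧ s.card = n} := by
  refine ⟨Fintype.card α, ?_⟩
  rintro n ⟨s, -, rfl⟩
  exact s.card_le_univ

lemma IsTFClique.card_le_tfCliqueNum [Fintype α] {s : Finset α} (hs : IsTFClique G s) :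
    s.card ≤ tfCliqueNum G :=
  le_csSup (bddAbove_card_isTFClique G) ⟨s, hs, rfl⟩

lemma exists_isTFClique_card_eq_tfCliqueNum [Fintype α] (G : SimpleGraph α) :
    ∃ s : Finset α, IsTFClique G s ∧ s.card = tfCliqueNum G :=
  Nat.sSup_mem (s := {n | ∃ s : Finset α, IsTFClique G s ∧ s.card = n})
    ⟨0, ∅, by simp [IsTFClique], rfl⟩ (bddAbove_card_isTFClique G)

end CartSum

/-- `ϖ(G ⊕ H) ≥ ϖ(G) · ϖ(H)`. -/
theorem tfCliqueNum_cartSum_ge {α β : Type*} [Fintype α] [Fintype β]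
    (G : SimpleGraph α) (H : SimpleGraph β) :
    tfCliqueNum G * tfCliqueNum H ≤ tfCliqueNum (cartSum G H) := by
  obtain ⟨s, hs, hs_card⟩ := exists_isTFClique_card_eq_tfCliqueNum G
  obtain ⟨t, ht, ht_card⟩ := exists_isTFClique_card_eq_tfCliqueNum H
  calc tfCliqueNum G * tfCliqueNum H = (s ×ˢ t).card := by
        rw [Finset.card_product, hs_card, ht_card]
    _ ≤ tfCliqueNum (cartSum G H) := (hs.cartSum ht).card_le_tfCliqueNum
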